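/- Let H be a Hermitian N×N complex matrix. Then the maximum over all unitary matrices V of order N of Σ_{i≠j} |(V H V†)_{ij}|² equals Tr(H²) − (Tr H)²/N; i.e., this value is an upper bound for every unitary V, and it is attained by some unitary V (namely V = F U with U H U† diagonal and F a complex Hadamard matrix). -/

import Mathlib

/-! For `G = V H Vᴴ` the off-diagonal weight is `‖G‖²_F - ∑ |G_ii|²`. The Frobenius norm is
unitarily invariant, so `‖G‖²_F = Tr(H²)`, while Cauchy–Schwarz gives
`∑ |G_ii|² ≥ |Tr G|² / N = (Tr H)² / N`, with equality when the diagonal of `G` is constant.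
A constant diagonal is reached by diagonalising `H = U D Uᴴ` and conjugating `D` by a complex
Hadamard matrix `F`, such as the Fourier matrix: `(F D Fᴴ)_ii = ∑_k |F_ik|² d_k = Tr D / N`. -/

open Matrix Finset

namespace Matrix

section RCLike

variable {𝕜 : Type*} [RCLike 𝕜] {m n : Type*} [Fintype m] [Fintype n]

theorem re_trace_mul_conjTranspose (G : Matrix m n 𝕜) :
    RCLike.re (G * Gᴴ).trace = ∑ i, ∑ j, ‖G i j‖ ^ 2 := by
  simp only [trace, diag, mul_apply, conjTranspose_apply, map_sum, RCLike.star_def,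
    RCLike.mul_conj, ← RCLike.ofReal_pow, RCLike.ofReal_re]

theorem norm_trace_sq_div_card_le (G : Matrix n n 𝕜) :
    ‖G.trace‖ ^ 2 / Fintype.card n ≤ ∑ i, ‖G i i‖ ^ 2 := by
  refine div_le_of_le_mul₀ (Nat.cast_nonneg _) (by positivity) ?_
  calc ‖G.trace‖ ^ 2 ≤ (∑ i, ‖G i i‖) ^ 2 := by
        gcongr; exact norm_sum_le _ _
    _ ≤ Fintype.card n * ∑ i, ‖G i i‖ ^ 2 := sq_sum_le_card_mul_sum_sq
    _ = _ := mul_comm _ _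

theorem IsHermitian.norm_trace_sq {H : Matrix n n 𝕜} (hH : H.IsHermitian) :
    ‖H.trace‖ ^ 2 = RCLike.re H.trace ^ 2 := by
  have : (RCLike.re H.trace : 𝕜) = H.trace := by
    rw [RCLike.conj_eq_iff_re.mp]
    rw [← RCLike.star_def, ← trace_conjTranspose, hH.eq]
  rw [← this, RCLike.norm_ofReal, sq_abs, RCLike.ofReal_re]

variable [DecidableEq n]

theorem sum_offDiag_norm_sq_eq (G : Matrix n n 𝕜) :
    ∑ p ∈ univ.offDiag, ‖G p.1 p.2‖ ^ 2 = RCLike.re (G * Gᴴ).trace - ∑ i, ‖G i i‖ ^ 2 := by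
  rw [re_trace_mul_conjTranspose, ← Fintype.sum_prod_type', ← univ_product_univ,
    ← diag_union_offDiag, sum_union (disjoint_diag_offDiag _), sum_diag]
  ring

theorem sum_offDiag_norm_sq_le (G : Matrix n n 𝕜) :
    ∑ p ∈ univ.offDiag, ‖G p.1 p.2‖ ^ 2 ≤
      RCLike.re (G * Gᴴ).trace - ‖G.trace‖ ^ 2 / Fintype.card n := by
  rw [sum_offDiag_norm_sq_eq]
  linarith [norm_trace_sq_div_card_le G]

theorem sum_offDiag_norm_sq_eq_of_diag_eq {G : Matrix n n 𝕜} {c : 𝕜} (hG : ∀ i, G i i = c) :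
    ∑ p ∈ univ.offDiag, ‖G p.1 p.2‖ ^ 2 =
      RCLike.re (G * Gᴴ).trace - ‖G.trace‖ ^ 2 / Fintype.card n := by
  have htrace : G.trace = Fintype.card n * c := by
    simp [trace, diag, hG]
  rw [sum_offDiag_norm_sq_eq, htrace]
  simp only [hG, sum_const, card_univ, nsmul_eq_mul, norm_mul, RCLike.norm_natCast]
  rcases (Fintype.card n).eq_zero_or_pos with h | h
  · simp [h]
  · field_simp

variable {V : Matrix n n 𝕜}

theorem trace_mul_mul_conjTranspose_of_mem_unitaryGroup (hV : V ∈ unitaryGroup n 𝕜)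
    (A : Matrix n n 𝕜) : (V * A * Vᴴ).trace = A.trace := by
  rw [trace_mul_cycle, ← star_eq_conjTranspose, mem_unitaryGroup_iff'.mp hV, one_mul]

theorem mul_mul_conjTranspose_mul_conjTranspose_of_mem_unitaryGroup
    (hV : V ∈ unitaryGroup n 𝕜) (A : Matrix n n 𝕜) :
    V * A * Vᴴ * (V * A * Vᴴ)ᴴ = V * (A * Aᴴ) * Vᴴ := by
  have hVV : Vᴴ * V = 1 := mem_unitaryGroup_iff'.mp hV
  simp only [conjTranspose_mul, conjTranspose_conjTranspose, Matrix.mul_assoc]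
  rw [← Matrix.mul_assoc Vᴴ V, hVV, Matrix.one_mul]

end RCLike

variable {m n : Type*} [Fintype m] [Fintype n] [DecidableEq m] [DecidableEq n]

structure IsComplexHadamard (F : Matrix n n ℂ) : Prop where
  mem_unitaryGroup : F ∈ unitaryGroup n ℂ
  norm_sq_apply : ∀ i j, ‖F i j‖ ^ 2 = (Fintype.card n : ℝ)⁻¹

theorem IsComplexHadamard.mul_diagonal_mul_conjTranspose_apply_self {F : Matrix n n ℂ}
    (hF : F.IsComplexHadamard) (d : n → ℂ) (i : n) :
    (F * diagonal d * Fᴴ) i i = (∑ k, d k) / Fintype.card n := by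
  have hentry : ∀ k, F i k * d k * star (F i k) = d k / Fintype.card n := by
    intro k
    rw [mul_right_comm, Complex.star_def, Complex.mul_conj', ← Complex.ofReal_pow,
      hF.norm_sq_apply]
    push_cast
    ring
  rw [mul_apply]
  simp only [mul_diagonal, conjTranspose_apply, hentry, sum_div]

theorem IsComplexHadamard.submatrix {F : Matrix n n ℂ} (hF : F.IsComplexHadamard)
    (e : m ≃ n) : (F.submatrix e e).IsComplexHadamard where
  mem_unitaryGroup := by
    rw [mem_unitaryGroup_iff, star_eq_conjTranspose, conjTranspose_submatrix,
      submatrix_mul_equiv, ← star_eq_conjTranspose, mem_unitaryGroup_iff.mp hF.mem_unitaryGroup,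
      submatrix_one_equiv]
  norm_sq_apply i j := by
    rw [submatrix_apply, hF.norm_sq_apply, Fintype.card_congr e]

end Matrix

namespace ZMod

variable (N : ℕ) [NeZero N]

noncomputable def fourierMatrix : Matrix (ZMod N) (ZMod N) ℂ :=
  fun j k => (√N : ℂ)⁻¹ * stdAddChar (j * k)

theorem isComplexHadamard_fourierMatrix : (fourierMatrix N).IsComplexHadamard where
  mem_unitaryGroup := by
    rw [mem_unitaryGroup_iff]
    ext j k
    have hentry : ∀ l, fourierMatrix N j l * star (fourierMatrix N) l k =
        (N : ℂ)⁻¹ * stdAddChar (l * (j - k)) := by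
      intro l
      have hscale : ((√N : ℝ) : ℂ)⁻¹ * ((√N : ℝ) : ℂ)⁻¹ = (N : ℂ)⁻¹ := by
        rw [← mul_inv, ← Complex.ofReal_mul, Real.mul_self_sqrt (Nat.cast_nonneg _),
          Complex.ofReal_natCast]
      simp only [fourierMatrix, star_apply, star_mul', star_inv₀, Complex.star_def,
        Complex.conj_ofReal, ← AddChar.map_neg_eq_conj]
      rw [mul_mul_mul_comm, hscale, ← AddChar.map_add_eq_mul]
      congr 2
      ring
    simp only [mul_apply, hentry, ← mul_sum, AddChar.sum_mulShift _ (isPrimitive_stdAddChar N),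
      sub_eq_zero, one_apply, ZMod.card]
    split_ifs <;> simp
  norm_sq_apply j k := by
    rw [fourierMatrix, norm_mul, AddChar.norm_apply, mul_one, norm_inv, Complex.norm_real,
      Real.norm_of_nonneg (Real.sqrt_nonneg _), inv_pow, Real.sq_sqrt (Nat.cast_nonneg _),
      ZMod.card]

end ZMod

theorem Matrix.exists_isComplexHadamard (n : Type*) [Fintype n] [DecidableEq n] :
    ∃ F : Matrix n n ℂ, F.IsComplexHadamard := by
  rcases isEmpty_or_nonempty n with hn | hn
  · exact ⟨1, one_mem _, isEmptyElim⟩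
  · have : NeZero (Fintype.card n) := ⟨Fintype.card_ne_zero⟩
    exact ⟨_, (ZMod.isComplexHadamard_fourierMatrix _).submatrix
      ((Fintype.equivFin n).trans (ZMod.finEquiv _).toEquiv)⟩

namespace Matrix

variable {n : Type*} [Fintype n] [DecidableEq n]

theorem IsHermitian.exists_unitary_conj_diag_eq {H : Matrix n n ℂ} (hH : H.IsHermitian) :
    ∃ V ∈ unitaryGroup n ℂ, ∀ i, (V * H * Vᴴ) i i = H.trace / Fintype.card n := by
  obtain ⟨F, hF⟩ := exists_isComplexHadamard n
  set U : Matrix n n ℂ := (hH.eigenvectorUnitary : Matrix n n ℂ)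
  have hU : Uᴴ * H * U = diagonal (RCLike.ofReal ∘ hH.eigenvalues) := by
    rw [← star_eq_conjTranspose]
    simpa using hH.conjStarAlgAut_star_eigenvectorUnitary
  have hconj : F * Uᴴ * H * (F * Uᴴ)ᴴ = F * (Uᴴ * H * U) * Fᴴ := by
    simp only [conjTranspose_mul, conjTranspose_conjTranspose, Matrix.mul_assoc]
  refine ⟨F * Uᴴ, mul_mem hF.mem_unitaryGroup (Unitary.star_mem hH.eigenvectorUnitary.2),
    fun i => ?_⟩
  rw [hconj, hU, hF.mul_diagonal_mul_conjTranspose_apply_self, hH.trace_eq_sum_eigenvalues]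
  rfl

end Matrix

theorem offdiag_weight_max_value (N : ℕ)
    (H : Matrix (Fin N) (Fin N) ℂ) (hH : H.IsHermitian) :
    (∀ V ∈ Matrix.unitaryGroup (Fin N) ℂ,
        ∑ p ∈ Finset.univ.offDiag, ‖(V * H * Vᴴ) p.1 p.2‖ ^ 2 ≤
          (Matrix.trace (H * H)).re - (Matrix.trace H).re ^ 2 / N) ∧
    (∃ V ∈ Matrix.unitaryGroup (Fin N) ℂ,
        ∑ p ∈ Finset.univ.offDiag, ‖(V * H * Vᴴ) p.1 p.2‖ ^ 2 =
          (Matrix.trace (H * H)).re - (Matrix.trace H).re ^ 2 / N) := by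
  have hinvariant : ∀ V ∈ unitaryGroup (Fin N) ℂ,
      RCLike.re ((V * H * Vᴴ) * (V * H * Vᴴ)ᴴ).trace -
          ‖(V * H * Vᴴ).trace‖ ^ 2 / Fintype.card (Fin N) =
        (trace (H * H)).re - (trace H).re ^ 2 / N := by
    intro V hV
    rw [mul_mul_conjTranspose_mul_conjTranspose_of_mem_unitaryGroup hV,
      trace_mul_mul_conjTranspose_of_mem_unitaryGroup hV,
      trace_mul_mul_conjTranspose_of_mem_unitaryGroup hV, hH.eq, hH.norm_trace_sq,
      Fintype.card_fin]
    rfl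
  refine ⟨fun V hV => hinvariant V hV ▸ sum_offDiag_norm_sq_le _, ?_⟩
  obtain ⟨V, hV, hdiag⟩ := hH.exists_unitary_conj_diag_eq
  exact ⟨V, hV, hinvariant V hV ▸ sum_offDiag_norm_sq_eq_of_diag_eq hdiag⟩
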